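/- arXiv:2011.10820 — 2 statements merged into one kernel-verified Lean document; each statement's English description precedes it below -/
import Mathlib

section
/- Second fundamental theorem for tensor space: Let d, h ≥ 1 and let π : MonoidAlgebra ℚ (Equiv.Perm (Fin h)) → Matrix (Fin h → Fin d) (Fin h → Fin d) ℚ be the algebra homomorphism induced by σ ↦ P_σ. Then (a) the kernel of π is nonzero if and only if h > d, and (b) if h > d, the kernel of π equals the two-sided ideal of MonoidAlgebra ℚ (Equiv.Perm (Fin h)) generated by the antisymmetrizer a = ∑ sgn(σ) • σ, where the sum runs over all permutations σ of Fin h fixing every index i with (i : ℕ) ≥ d + 1 (a copy of the symmetric group S_{d+1} on the first d+1 letters). -/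
/-- The permutation operator `P_σ` on the `m`-th tensor power of the `d`-dimensional space,
realized as a matrix indexed by functions `Fin m → Fin d`. -/
def permMat (d m : ℕ) (R : Type*) [CommRing R] (σ : Equiv.Perm (Fin m)) :
    Matrix (Fin m → Fin d) (Fin m → Fin d) R :=
  Matrix.of fun f g => if g = f ∘ σ then 1 else 0

/-- The Kronecker product `K(x) = x 0 ⊗ x 1 ⊗ ⋯ ⊗ x (m-1)` of a family of `d × d` matrices. -/
def kron (d m : ℕ) (R : Type*) [CommRing R]
    (x : Fin m → Matrix (Fin d) (Fin d) R) :
    Matrix (Fin m → Fin d) (Fin m → Fin d) R :=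
  Matrix.of fun f g => ∏ i, x i (f i) (g i)

/-!
Over any commutative ring, let `a_S = ∑ sgn ρ • ρ` over the permutations supported in a set `S` of
letters. If `#S > d`, then in the `(f, g)` entry of `permRep (a_S)` two letters of `S` have the same
`f`-value and left multiplication by their transposition is a sign-reversing involution, so
`permRep (a_S) = 0`; the `a_S` with `#S = d + 1` are all conjugate to each other.

Conversely, call `σ` good if its sequence of values has no decreasing subsequence of length `d + 1`.
If `σ` is not good and `S` is the set of values of such a subsequence, then `σ` is the
lexicographically largest term of `a_S σ`, so by well-founded induction every permutation is a
combination of good ones modulo the ideal generated by the `a_S`. A good `σ` splits its positions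
into `d` increasing runs (dual Mirsky); colouring them by `c`, the `(c ∘ σ⁻¹, c)` entry of
`permRep x` only sees permutations lexicographically at least `σ`, so for the largest `σ` in the
support of `x` it is the coefficient of `σ`. Hence `permRep` is injective on combinations of good
permutations, which are all permutations when `h ≤ d`.
-/

open Equiv Finset MonoidAlgebra

lemma permMat_one (d m : ℕ) (R : Type*) [CommRing R] : permMat d m R 1 = 1 := by
  ext f g
  simp [permMat, Matrix.one_apply, eq_comm]

lemma permMat_mul (d m : ℕ) (R : Type*) [CommRing R] (σ τ : Perm (Fin m)) :
    permMat d m R (σ * τ) = permMat d m R σ * permMat d m R τ := by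
  ext f g
  simp only [permMat, Matrix.mul_apply, Matrix.of_apply, mul_ite, mul_one, mul_zero]
  rw [Finset.sum_eq_single (f ∘ σ) (fun k _ hk => by simp [hk]) (by simp)]
  simp only [Perm.coe_mul, Function.comp_assoc]
  congr

noncomputable def permRep (d m : ℕ) (R : Type*) [CommRing R] :
    MonoidAlgebra R (Perm (Fin m)) →ₐ[R] Matrix (Fin m → Fin d) (Fin m → Fin d) R :=
  lift R _ _ ⟨⟨permMat d m R, permMat_one d m R⟩, permMat_mul d m R⟩

variable {R : Type*} [CommRing R]

section permRep

variable {d m : ℕ}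

@[simp]
lemma permRep_of (σ : Perm (Fin m)) : permRep d m R (of R _ σ) = permMat d m R σ :=
  lift_of _ σ

lemma permRep_apply (x : MonoidAlgebra R (Perm (Fin m))) (f g : Fin m → Fin d) :
    permRep d m R x f g = ∑ σ, x.coeff σ * if g = f ∘ σ then 1 else 0 := by
  rw [permRep, lift_apply, Finsupp.sum_fintype _ _ (by simp), Matrix.sum_apply]
  simp [permMat]

end permRep

section antisymmetrizer

variable (R) {α : Type*} [Fintype α] [DecidableEq α]

def supportedPerms (S : Finset α) : Finset (Perm α) :=
  univ.filter fun ρ => ∀ i ∉ S, ρ i = i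

@[simp]
lemma mem_supportedPerms {S : Finset α} {ρ : Perm α} : ρ ∈ supportedPerms S ↔ ∀ i ∉ S, ρ i = i := by
  simp [supportedPerms]

lemma apply_mem_of_mem_supportedPerms {S : Finset α} {ρ : Perm α} (hρ : ρ ∈ supportedPerms S)
    {i : α} (hi : i ∈ S) : ρ i ∈ S := by
  by_contra h
  rw [ρ.injective (mem_supportedPerms.1 hρ _ h)] at h
  exact h hi

noncomputable def antisymmetrizer (S : Finset α) : MonoidAlgebra R (Perm α) :=
  ∑ ρ ∈ supportedPerms S, ((Perm.sign ρ : ℤ) : R) • of R _ ρ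

variable {R}

lemma coeff_antisymmetrizer_one (S : Finset α) : (antisymmetrizer R S).coeff 1 = 1 := by
  rw [antisymmetrizer, coeff_sum, Finset.sum_apply', Finset.sum_eq_single (1 : Perm α)]
  · simp
  · intro ρ _ hρ
    simp [hρ]
  · simp

lemma antisymmetrizer_ne_zero [Nontrivial R] (S : Finset α) : antisymmetrizer R S ≠ 0 := by
  intro h
  simpa [h] using coeff_antisymmetrizer_one (R := R) S

lemma antisymmetrizer_mul_of (S : Finset α) (τ : Perm α) :
    antisymmetrizer R S * of R _ τ
      = ∑ ρ ∈ supportedPerms S, ((Perm.sign ρ : ℤ) : R) • of R _ (ρ * τ) := by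
  simp only [antisymmetrizer, Finset.sum_mul, smul_mul_assoc, ← map_mul]

lemma of_mul_antisymmetrizer_mul_of_inv (g : Perm α) (S : Finset α) :
    of R _ g * antisymmetrizer R S * of R _ g⁻¹ = antisymmetrizer R (S.map g.toEmbedding) := by
  simp only [antisymmetrizer, Finset.mul_sum, Finset.sum_mul, mul_smul_comm, smul_mul_assoc,
    ← map_mul]
  refine Finset.sum_equiv (MulAut.conj g).toEquiv (fun ρ => ?_) (fun ρ _ => ?_)
  · simp only [mem_supportedPerms, mem_map_equiv]
    conv_rhs => rw [← g.forall_congr_right]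
    simp [MulAut.conj_apply]
  · simp only [MulEquiv.toEquiv_eq_coe, MulEquiv.coe_toEquiv, MulAut.conj_apply, map_mul,
      Perm.sign_inv]
    rw [mul_comm, ← mul_assoc, Int.units_mul_self, one_mul]

lemma antisymmetrizer_mem_span_of_card_eq {S T : Finset α} (hST : S.card = T.card) :
    antisymmetrizer R T ∈ TwoSidedIdeal.span {antisymmetrizer R S} := by
  obtain ⟨g, rfl⟩ := Perm.exists_map_finset_eq S T hST
  rw [← of_mul_antisymmetrizer_mul_of_inv]
  exact TwoSidedIdeal.mul_mem_right _ _ _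
    (TwoSidedIdeal.mul_mem_left _ _ _ (TwoSidedIdeal.subset_span rfl))

end antisymmetrizer

lemma permRep_antisymmetrizer {d m : ℕ} {S : Finset (Fin m)} (hS : d < S.card) :
    permRep d m R (antisymmetrizer R S) = 0 := by
  ext f g
  simp only [antisymmetrizer, map_sum, map_smul, permRep_of, Matrix.sum_apply, Matrix.smul_apply,
    permMat, Matrix.of_apply, smul_eq_mul, Matrix.zero_apply]
  obtain ⟨i, hi, j, hj, hij, hfij⟩ := Finset.exists_ne_map_eq_of_card_lt_of_maps_to
    (t := univ) (by simpa using hS) (f := f) (fun _ _ => mem_coe.2 (mem_univ _))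
  have hf : f ∘ swap i j = f := by simp [comp_swap_eq_update, hfij]
  refine Finset.sum_involution (fun ρ _ => swap i j * ρ) (fun ρ _ => ?_) (fun ρ _ _ => ?_)
    (fun ρ hρ => ?_) (fun ρ _ => swap_mul_self_mul i j ρ)
  · have : f ∘ swap i j ∘ ρ = f ∘ ρ := by rw [← Function.comp_assoc, hf]
    by_cases hg : g = f ∘ ρ <;> simp [hg, this, Perm.sign_mul, Perm.sign_swap hij]
  · simpa using hij
  · simp only [mem_supportedPerms, Perm.mul_apply] at hρ ⊢
    intro k hk
    rw [hρ k hk, swap_apply_of_ne_of_ne (by rintro rfl; exact hk hi) (by rintro rfl; exact hk hj)]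

section DecreasingSubsequences

variable {α β : Type*} [LinearOrder α] [LinearOrder β] {f : α → β} {d : ℕ}

def LongestDecreasingLE (d : ℕ) (f : α → β) : Prop :=
  ∀ s : Finset α, StrictAntiOn f s → s.card ≤ d

lemma exists_strictAntiOn_card_eq_of_not_longestDecreasingLE (h : ¬ LongestDecreasingLE d f) :
    ∃ s : Finset α, StrictAntiOn f s ∧ s.card = d + 1 := by
  simp only [LongestDecreasingLE, not_forall, not_le] at h
  obtain ⟨s, hs, hcard⟩ := h
  obtain ⟨t, hts, htcard⟩ := Finset.exists_subset_card_eq hcard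
  exact ⟨t, hs.mono (coe_subset.2 hts), htcard⟩

variable [Fintype α]

open Classical in
noncomputable def decreasingHeight (f : α → β) (p : α) : ℕ :=
  (univ.filter fun s : Finset α => StrictAntiOn f s ∧ p ∈ s ∧ ∀ a ∈ s, a ≤ p).sup card

lemma card_le_decreasingHeight {p : α} {s : Finset α} (hs : StrictAntiOn f s) (hp : p ∈ s)
    (hle : ∀ a ∈ s, a ≤ p) : s.card ≤ decreasingHeight f p := by
  classical
  exact Finset.le_sup (f := card) (mem_filter.2 ⟨mem_univ _, hs, hp, hle⟩)

lemma exists_card_eq_decreasingHeight (f : α → β) (p : α) :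
    ∃ s : Finset α, StrictAntiOn f s ∧ p ∈ s ∧ (∀ a ∈ s, a ≤ p) ∧
      s.card = decreasingHeight f p := by
  classical
  obtain ⟨s, hs, heq⟩ := Finset.exists_mem_eq_sup
    (univ.filter fun s : Finset α => StrictAntiOn f s ∧ p ∈ s ∧ ∀ a ∈ s, a ≤ p)
    ⟨{p}, by simp⟩ card
  simp only [mem_filter, mem_univ, true_and] at hs
  exact ⟨s, hs.1, hs.2.1, hs.2.2, by rw [decreasingHeight]; convert heq.symm⟩

lemma one_le_decreasingHeight (f : α → β) (p : α) : 1 ≤ decreasingHeight f p := by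
  simpa using card_le_decreasingHeight (f := f) (s := {p}) (by simp) (mem_singleton_self p)
    (by simp)

lemma LongestDecreasingLE.decreasingHeight_le (h : LongestDecreasingLE d f) (p : α) :
    decreasingHeight f p ≤ d := by
  obtain ⟨s, hs, -, -, hcard⟩ := exists_card_eq_decreasingHeight f p
  exact hcard ▸ h s hs

lemma decreasingHeight_lt {p q : α} (hpq : p < q) (hf : f q < f p) :
    decreasingHeight f p < decreasingHeight f q := by
  obtain ⟨s, hs, hps, hle, hcard⟩ := exists_card_eq_decreasingHeight f p
  have hqs : q ∉ s := fun hq => (hle q hq).not_gt hpq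
  have hdec : StrictAntiOn f ↑(insert q s) := by
    intro a ha b hb hab
    simp only [coe_insert, Set.mem_insert_iff, mem_coe] at ha hb
    rcases ha with rfl | ha <;> rcases hb with rfl | hb
    · exact absurd hab (lt_irrefl _)
    · exact absurd ((hle b hb).trans_lt hpq) hab.not_gt
    · exact hf.trans_le (hs.antitoneOn ha hps (hle a ha))
    · exact hs ha hb hab
  have := card_le_decreasingHeight hdec (mem_insert_self q s)
    (by simpa using fun a ha => (hle a ha).trans hpq.le)
  rw [card_insert_of_notMem hqs] at this
  omega

theorem LongestDecreasingLE.exists_coloring (h : LongestDecreasingLE d f) :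
    ∃ c : α → Fin d, ∀ p q, p < q → c p = c q → f p ≤ f q := by
  refine ⟨fun p => ⟨decreasingHeight f p - 1, ?_⟩, fun p q hpq hc => ?_⟩
  · have := one_le_decreasingHeight f p
    have := h.decreasingHeight_le p
    omega
  · by_contra! hf
    have := decreasingHeight_lt hpq hf
    have := one_le_decreasingHeight f p
    simp only [Fin.mk.injEq] at hc
    omega

lemma longestDecreasingLE_of_card_le (h : Fintype.card α ≤ d) : LongestDecreasingLE d f :=
  fun s _ => (card_le_univ s).trans h

end DecreasingSubsequences

section SecondFundamentalTheorem

variable {d m : ℕ}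

lemma toLex_mul_lt_of_strictAntiOn {σ ρ : Perm (Fin m)} {s : Finset (Fin m)}
    (hs : StrictAntiOn σ s) (hρ : ρ ∈ supportedPerms (s.map σ.toEmbedding)) (hne : ρ ≠ 1) :
    toLex ⇑(ρ * σ) < toLex ⇑σ := by
  refine lt_of_le_of_ne (not_lt.1 fun ⟨i, hagree, hlt⟩ => ?_)
    (fun h => hne (mul_eq_right.1 (DFunLike.coe_injective (toLex_inj.1 h))))
  simp only [Pi.toLex_apply, Perm.mul_apply] at hagree hlt
  have hi : σ i ∈ s.map σ.toEmbedding := by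
    by_contra h
    exact hlt.ne' (mem_supportedPerms.1 hρ _ h)
  obtain ⟨q, hq, hσq⟩ := mem_map.1 (apply_mem_of_mem_supportedPerms hρ hi)
  simp only [toEmbedding_apply] at hσq
  have his : i ∈ s := by simpa using hi
  rcases lt_trichotomy q i with hqi | rfl | hiq
  · have := hagree q hqi
    rw [hσq] at this
    exact hlt.ne (ρ.injective this)
  · exact hlt.ne' hσq.symm
  · exact (hs his hq hiq).not_gt (hσq ▸ hlt)

lemma toLex_le_of_coloring {σ σ' : Perm (Fin m)} {c : Fin m → Fin d}
    (hc : ∀ p q, p < q → c p = c q → σ p ≤ σ q) (hσ' : ∀ p, c (σ.symm (σ' p)) = c p) :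
    toLex ⇑σ ≤ toLex ⇑σ' := by
  refine not_lt.1 fun ⟨i, hagree, hlt⟩ => ?_
  simp only [Pi.toLex_apply] at hagree hlt
  have hq : σ (σ.symm (σ' i)) = σ' i := σ.apply_symm_apply _
  rcases lt_trichotomy (σ.symm (σ' i)) i with hqi | hqi | hqi
  · have := hagree _ hqi
    rw [hq] at this
    exact hqi.ne (σ'.injective this)
  · rw [hqi] at hq
    exact hlt.ne hq.symm
  · exact (hc i _ hqi (hσ' i).symm).not_gt (by rwa [hq])

theorem eq_zero_of_mem_supported_of_permRep_eq_zero {x : MonoidAlgebra R (Perm (Fin m))}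
    (hx : x ∈ supported R R {σ : Perm (Fin m) | LongestDecreasingLE d σ})
    (h : permRep d m R x = 0) : x = 0 := by
  by_contra hne
  obtain ⟨σ, hσ, hmax⟩ := Finset.exists_max_image x.coeff.support (fun σ => toLex ⇑σ)
    (Finsupp.support_nonempty_iff.2 (by simpa using hne))
  obtain ⟨c, hc⟩ := LongestDecreasingLE.exists_coloring (mem_supported.1 hx hσ)
  have hentry : permRep d m R x (c ∘ σ.symm) c = x.coeff σ := by
    rw [permRep_apply, Finset.sum_eq_single σ]
    · simp [Function.comp_assoc]
    · intro σ' _ hσ'σ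
      by_cases hσ' : c = c ∘ σ.symm ∘ σ'
      · have hle := toLex_le_of_coloring hc (fun p => (congrFun hσ' p).symm)
        have hσ'x : σ' ∉ x.coeff.support := fun hm =>
          hσ'σ (DFunLike.coe_injective (toLex_inj.1 (le_antisymm (hmax σ' hm) hle)))
        simp [Finsupp.notMem_support_iff.1 hσ'x]
      · simp [Function.comp_assoc, hσ']
    · simp
  exact Finsupp.mem_support_iff.1 hσ (by simpa [h] using hentry.symm)

lemma of_mem_supported_sup {I : TwoSidedIdeal (MonoidAlgebra R (Perm (Fin m)))}
    (hI : ∀ S : Finset (Fin m), S.card = d + 1 → antisymmetrizer R S ∈ I) (σ : Perm (Fin m)) :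
    of R _ σ ∈
      supported R R {σ : Perm (Fin m) | LongestDecreasingLE d σ} ⊔ I.asIdeal.restrictScalars R := by
  induction σ using (InvImage.wf (fun σ : Perm (Fin m) => toLex ⇑σ) wellFounded_lt).induction
    with | _ σ ih
  by_cases hσ : LongestDecreasingLE d σ
  · refine Submodule.mem_sup_left (mem_supported.2 ?_)
    exact (coe_subset.2 Finsupp.support_single_subset).trans (by simpa using hσ)
  obtain ⟨s, hs, hcard⟩ := exists_strictAntiOn_card_eq_of_not_longestDecreasingLE hσ
  set S := s.map σ.toEmbedding
  have h1 : (1 : Perm (Fin m)) ∈ supportedPerms S := by simp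
  have hσ_eq : of R _ σ = antisymmetrizer R S * of R _ σ -
      ∑ ρ ∈ (supportedPerms S).erase 1, ((Perm.sign ρ : ℤ) : R) • of R _ (ρ * σ) := by
    rw [antisymmetrizer_mul_of, ← Finset.add_sum_erase _ _ h1]
    simp
  rw [hσ_eq]
  refine sub_mem (Submodule.mem_sup_right ?_)
    (sum_mem fun ρ hρ => Submodule.smul_mem _ _ (ih _ ?_))
  · exact I.mul_mem_right _ _ (hI S (by simpa [S] using hcard))
  · obtain ⟨hρ1, hρ⟩ := mem_erase.1 hρ
    exact toLex_mul_lt_of_strictAntiOn hs hρ hρ1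

theorem supported_sup_eq_top {I : TwoSidedIdeal (MonoidAlgebra R (Perm (Fin m)))}
    (hI : ∀ S : Finset (Fin m), S.card = d + 1 → antisymmetrizer R S ∈ I) :
    supported R R {σ : Perm (Fin m) | LongestDecreasingLE d σ} ⊔ I.asIdeal.restrictScalars R
      = ⊤ := by
  rw [eq_top_iff]
  rintro x -
  induction x using MonoidAlgebra.induction_on with
  | of σ => exact of_mem_supported_sup hI σ
  | add x y hx hy => exact add_mem hx hy
  | smul r x hx => exact Submodule.smul_mem _ r hx

theorem ker_permRep {S : Finset (Fin m)} (hS : S.card = d + 1) :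
    TwoSidedIdeal.ker (permRep d m R) = TwoSidedIdeal.span {antisymmetrizer R S} := by
  have hle : TwoSidedIdeal.span {antisymmetrizer R S} ≤ TwoSidedIdeal.ker (permRep d m R) :=
    TwoSidedIdeal.span_le.2 (Set.singleton_subset_iff.2
      ((TwoSidedIdeal.mem_ker _).2 (permRep_antisymmetrizer (hS ▸ d.lt_succ_self))))
  refine le_antisymm (fun x hx => ?_) hle
  have hmem : x ∈ (⊤ : Submodule R _) := Submodule.mem_top
  rw [← supported_sup_eq_top fun T hT => antisymmetrizer_mem_span_of_card_eq (hS.trans hT.symm)]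
    at hmem
  obtain ⟨y, hy, z, hz, rfl⟩ := Submodule.mem_sup.1 hmem
  rw [Submodule.restrictScalars_mem, TwoSidedIdeal.mem_asIdeal] at hz
  have hz0 := (TwoSidedIdeal.mem_ker _).1 (hle hz)
  have hy0 : y = 0 := eq_zero_of_mem_supported_of_permRep_eq_zero hy
    (by simpa [hz0] using (TwoSidedIdeal.mem_ker _).1 hx)
  simpa [hy0] using hz

theorem permRep_injective (hmd : m ≤ d) : Function.Injective (permRep d m R) :=
  (injective_iff_map_eq_zero _).2 fun _ hx => eq_zero_of_mem_supported_of_permRep_eq_zero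
    (mem_supported.2 fun _ _ => longestDecreasingLE_of_card_le (by simpa using hmd)) hx

end SecondFundamentalTheorem

theorem SFT_tensor_space_general (d h : ℕ)
    (π : MonoidAlgebra ℚ (Equiv.Perm (Fin h)) →ₐ[ℚ]
      Matrix (Fin h → Fin d) (Fin h → Fin d) ℚ)
    (hπ : ∀ σ : Equiv.Perm (Fin h),
      π (MonoidAlgebra.of ℚ (Equiv.Perm (Fin h)) σ) = permMat d h ℚ σ) :
    ((∃ x : MonoidAlgebra ℚ (Equiv.Perm (Fin h)), x ≠ 0 ∧ π x = 0) ↔ d < h) ∧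
    (d < h → ∀ x : MonoidAlgebra ℚ (Equiv.Perm (Fin h)),
      π x = 0 ↔ x ∈ TwoSidedIdeal.span
        {∑ σ ∈ Finset.univ.filter
            (fun σ : Equiv.Perm (Fin h) => ∀ i : Fin h, d + 1 ≤ (i : ℕ) → σ i = i),
          ((Equiv.Perm.sign σ : ℤ) : ℚ) • MonoidAlgebra.of ℚ (Equiv.Perm (Fin h)) σ}) := by
  obtain rfl : π = permRep d h ℚ :=
    MonoidAlgebra.algHom_ext (fun σ => (hπ σ).trans (permRep_of σ).symm) (Subsingleton.elim _ _)
  have hfirst (hdh : d < h) : ∑ σ ∈ univ.filter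
      (fun σ : Perm (Fin h) => ∀ i : Fin h, d + 1 ≤ (i : ℕ) → σ i = i),
        ((Perm.sign σ : ℤ) : ℚ) • of ℚ (Perm (Fin h)) σ
      = antisymmetrizer ℚ (Iic (⟨d, hdh⟩ : Fin h)) := by
    refine Finset.sum_congr (Finset.ext fun σ => ?_) fun _ _ => rfl
    simp [Fin.le_def]
  refine ⟨⟨fun ⟨x, hx0, hx⟩ => ?_, fun hdh => ?_⟩, fun hdh x => ?_⟩
  · by_contra! hhd
    exact hx0 (permRep_injective hhd (hx.trans (map_zero _).symm))
  · exact ⟨_, antisymmetrizer_ne_zero _, permRep_antisymmetrizer (by simp : d < #(Iic ⟨d, hdh⟩))⟩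
  · rw [hfirst hdh, ← ker_permRep (Fin.card_Iic _), TwoSidedIdeal.mem_ker]

/-- **Second fundamental theorem for tensor space.**  Let `π` be the algebra homomorphism from the
group algebra `ℚ[S_h]` to matrices on the `h`-th tensor power of `ℚ^d` induced by `σ ↦ P_σ`.
Then (a) the kernel of `π` is nonzero iff `h > d`, and (b) if `h > d` the kernel equals the
two-sided ideal generated by the antisymmetrizer `∑ sgn(σ) • σ` over the copy of `S_{d+1}`
consisting of permutations fixing every index `i ≥ d + 1`. -/
theorem SFT_tensor_space (d h : ℕ) (hd : 1 ≤ d) (hh : 1 ≤ h)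
    (π : MonoidAlgebra ℚ (Equiv.Perm (Fin h)) →ₐ[ℚ]
      Matrix (Fin h → Fin d) (Fin h → Fin d) ℚ)
    (hπ : ∀ σ : Equiv.Perm (Fin h),
      π (MonoidAlgebra.of ℚ (Equiv.Perm (Fin h)) σ) = permMat d h ℚ σ) :
    ((∃ x : MonoidAlgebra ℚ (Equiv.Perm (Fin h)), x ≠ 0 ∧ π x = 0) ↔ d < h) ∧
    (d < h → ∀ x : MonoidAlgebra ℚ (Equiv.Perm (Fin h)),
      π x = 0 ↔ x ∈ TwoSidedIdeal.span
        {∑ σ ∈ Finset.univ.filter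
            (fun σ : Equiv.Perm (Fin h) => ∀ i : Fin h, d + 1 ≤ (i : ℕ) → σ i = i),
          ((Equiv.Perm.sign σ : ℤ) : ℚ) • MonoidAlgebra.of ℚ (Equiv.Perm (Fin h)) σ}) :=
  SFT_tensor_space_general d h π hπ
end

section
/- Partial trace of a transposition composed with a Kronecker product: Let d ≥ 1, n ≥ 1, let R be a commutative ring, let i : Fin n, let τ = Equiv.swap (Fin.castSucc i) (Fin.last n) ∈ Equiv.Perm (Fin (n+1)), and let X : Fin (n+1) → Matrix (Fin d) (Fin d) R. Then ptr (P_τ * K X) = K X', where X' : Fin n → Matrix (Fin d) (Fin d) R is given by X' j = X (Fin.last n) * X (Fin.castSucc i) if j = i, and X' j = X (Fin.castSucc j) otherwise. -/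
def ptr (d n : ℕ) (R : Type*) [CommRing R]
    (M : Matrix (Fin (n + 1) → Fin d) (Fin (n + 1) → Fin d) R) :
    Matrix (Fin n → Fin d) (Fin n → Fin d) R :=
  Matrix.of fun f g => ∑ a : Fin d, M (Fin.snoc f a) (Fin.snoc g a)

open Finset

theorem permMat_mul_apply {d m : ℕ} {R : Type*} [CommRing R] (σ : Equiv.Perm (Fin m))
    (M : Matrix (Fin m → Fin d) (Fin m → Fin d) R) (f g : Fin m → Fin d) :
    (permMat d m R σ * M) f g = M (f ∘ σ) g := by
  simp [permMat, Matrix.mul_apply]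

theorem Fin.snoc_comp_swap_castSucc_last {α : Type*} {n : ℕ} (f : Fin n → α) (a : α)
    (i : Fin n) :
    (Fin.snoc f a : Fin (n + 1) → α) ∘ Equiv.swap i.castSucc (Fin.last n) =
      Fin.snoc (Function.update f i a) (f i) := by
  funext k
  induction k using Fin.lastCases with
  | last => simp
  | cast j =>
    by_cases h : j = i
    · subst h
      simp
    · rw [Function.comp_apply, Equiv.swap_apply_of_ne_of_ne (by simpa using h)
        (Fin.castSucc_lt_last j).ne]
      simp [h]

section kron

variable {d m : ℕ} {R : Type*} [CommRing R]

theorem kron_snoc_apply (x : Fin (m + 1) → Matrix (Fin d) (Fin d) R) (f g : Fin m → Fin d)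
    (a b : Fin d) :
    kron d (m + 1) R x (Fin.snoc f a) (Fin.snoc g b) =
      kron d m R (fun j => x j.castSucc) f g * x (Fin.last m) a b := by
  simp [kron, Fin.prod_univ_castSucc]

variable (x : Fin m → Matrix (Fin d) (Fin d) R) (f g : Fin m → Fin d) (i : Fin m)

theorem kron_update_left_apply (a : Fin d) :
    kron d m R x (Function.update f i a) g =
      x i a (g i) * ∏ j ∈ univ \ {i}, x j (f j) (g j) := by
  simp only [kron, Matrix.of_apply, Function.apply_update (fun j b => x j b (g j)),
    prod_update_of_mem (mem_univ i)]

theorem kron_update_apply (A : Matrix (Fin d) (Fin d) R) :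
    kron d m R (Function.update x i A) f g =
      A (f i) (g i) * ∏ j ∈ univ \ {i}, x j (f j) (g j) := by
  simp only [kron, Matrix.of_apply,
    Function.apply_update (fun j (M : Matrix (Fin d) (Fin d) R) => M (f j) (g j)),
    prod_update_of_mem (mem_univ i)]

theorem sum_kron_update_left_mul (B : Matrix (Fin d) (Fin d) R) :
    ∑ a, kron d m R x (Function.update f i a) g * B (f i) a =
      kron d m R (Function.update x i (B * x i)) f g := by
  simp only [kron_update_left_apply, kron_update_apply, Matrix.mul_apply, sum_mul]
  exact sum_congr rfl fun a _ => by ring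

end kron

theorem ptr_swap_kron_general (d n : ℕ) (R : Type*) [CommRing R] (i : Fin n)
    (X : Fin (n + 1) → Matrix (Fin d) (Fin d) R) :
    ptr d n R
      (permMat d (n + 1) R (Equiv.swap (Fin.castSucc i) (Fin.last n)) * kron d (n + 1) R X) =
    kron d n R (fun j =>
      if j = i then X (Fin.last n) * X (Fin.castSucc i) else X (Fin.castSucc j)) := by
  have hfamily : (fun j => if j = i then X (Fin.last n) * X i.castSucc else X j.castSucc) =
      Function.update (fun j => X j.castSucc) i (X (Fin.last n) * X i.castSucc) := by
    funext j
    rw [Function.update_apply]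
  ext f g
  rw [hfamily, ← sum_kron_update_left_mul]
  simp only [ptr, Matrix.of_apply, permMat_mul_apply, Fin.snoc_comp_swap_castSucc_last,
    kron_snoc_apply]

/-- **Partial trace of a transposition composed with a Kronecker product.**  For the transposition
`τ = (i, n)` of the last index with index `i`, the partial trace of `P_τ * K X` is the Kronecker
product of the family obtained by replacing `X i` with `X n * X i` and dropping the last factor. -/
theorem ptr_swap_kron (d n : ℕ) (hd : 1 ≤ d) (hn : 1 ≤ n)
    (R : Type*) [CommRing R] (i : Fin n)
    (X : Fin (n + 1) → Matrix (Fin d) (Fin d) R) :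
    ptr d n R
      (permMat d (n + 1) R (Equiv.swap (Fin.castSucc i) (Fin.last n)) * kron d (n + 1) R X) =
    kron d n R (fun j =>
      if j = i then X (Fin.last n) * X (Fin.castSucc i) else X (Fin.castSucc j)) :=
  ptr_swap_kron_general d n R i X
end
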